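/- arXiv:1010.0861 — 3 statements merged into one kernel-verified Lean document; each statement's English description precedes it below -/
import Mathlib

section
/- For any element S of the space R^∇(so(p,q)) = {S : V → R(so(p,q)) linear | S_X(Y,Z) + S_Y(Z,X) + S_Z(X,Y) = 0}, the trace P(X) := Σ_{i,j} g^{ij} S_{X_i}(X, X_j) (taken over a basis X_1,…,X_n with inverse Gram matrix g^{ij}) belongs to the space P(so(p,q)) = {P : V → so(p,q) | g(P(X)Y,Z) + g(P(Y)Z,X) + g(P(Z)X,Y) = 0}. -/
open LinearMap Finset Module

variable {V : Type*} [AddCommGroup V] [Module ℝ V]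

/-- The endomorphism `(X ∧ Y) : Z ↦ g(X,Z)•Y - g(Y,Z)•X`. -/
noncomputable def wdg (g : LinearMap.BilinForm ℝ V) (X Y : V) : V →ₗ[ℝ] V :=
  (g X).smulRight Y - (g Y).smulRight X

/-- `A` belongs to `so(p,q)`: it is skew-adjoint with respect to `g`. -/
def skewAdj (g : LinearMap.BilinForm ℝ V) (A : V →ₗ[ℝ] V) : Prop :=
  ∀ X Y : V, g (A X) Y + g X (A Y) = 0

/-- Nondegeneracy of a bilinear form. -/
def Nondeg (g : LinearMap.BilinForm ℝ V) : Prop :=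
  ∀ X : V, (∀ Y : V, g X Y = 0) → X = 0

/-- `R` is an algebraic curvature tensor: bilinear, skew, `so(p,q)`-valued,
and satisfying the first Bianchi identity. -/
def isCurv (g : LinearMap.BilinForm ℝ V) (R : V → V → V →ₗ[ℝ] V) : Prop :=
  (∀ (a : ℝ) (X X' Y : V), R (a • X + X') Y = a • R X Y + R X' Y) ∧
  (∀ X Y : V, R X Y = - R Y X) ∧
  (∀ X Y : V, skewAdj g (R X Y)) ∧
  (∀ X Y Z : V, R X Y Z + R Y Z X + R Z X Y = 0)

/-- `(H ∧ g)(X,Y) = HX ∧ Y + X ∧ HY`. -/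
noncomputable def hwdg (g : LinearMap.BilinForm ℝ V) (H : V →ₗ[ℝ] V) (X Y : V) : V →ₗ[ℝ] V :=
  wdg g (H X) Y + wdg g X (H Y)

/-- Ricci contraction `Ric(R)(X,Y) = tr(Z ↦ R(Z,X)Y)`, computed in a basis. -/
noncomputable def ricciOf {ι : Type*} [Fintype ι] (b : Basis ι ℝ V)
    (R : V → V → V →ₗ[ℝ] V) (X Y : V) : ℝ :=
  ∑ i, b.coord i (R (b i) X Y)

/-- The inverse Gram matrix `g^{ij}` of the basis `b`. -/
noncomputable def gramInv {ι : Type*} [Fintype ι] [DecidableEq ι]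
    (g : LinearMap.BilinForm ℝ V) (b : Basis ι ℝ V) : Matrix ι ι ℝ :=
  (Matrix.of fun i j => g (b i) (b j))⁻¹

/-- Scalar curvature: the `g`-trace of the Ricci contraction. -/
noncomputable def scalarOf {ι : Type*} [Fintype ι] [DecidableEq ι]
    (g : LinearMap.BilinForm ℝ V) (b : Basis ι ℝ V) (R : V → V → V →ₗ[ℝ] V) : ℝ :=
  ∑ i, ∑ j, gramInv g b i j * ricciOf b R (b i) (b j)

/-- The trace `tr_{1,5}(S)(X) = g^{ij} S_{X_i}(X, X_j)`. -/
noncomputable def tr15 {ι : Type*} [Fintype ι] [DecidableEq ι]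
    (g : LinearMap.BilinForm ℝ V) (b : Basis ι ℝ V)
    (S : V → V → V → V →ₗ[ℝ] V) (X : V) : V →ₗ[ℝ] V :=
  ∑ i, ∑ j, gramInv g b i j • S (b i) X (b j)

/-- `Ric̃(P) = g^{ij} P(X_i) X_j`. -/
noncomputable def ricTilde {ι : Type*} [Fintype ι] [DecidableEq ι]
    (g : LinearMap.BilinForm ℝ V) (b : Basis ι ℝ V)
    (P : V → V →ₗ[ℝ] V) : V :=
  ∑ i, ∑ j, gramInv g b i j • P (b i) (b j)

/-- Membership in `P(so(p,q))`: linear, `so(p,q)`-valued, cyclic identity. -/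
def isP (g : LinearMap.BilinForm ℝ V) (P : V → V →ₗ[ℝ] V) : Prop :=
  (∀ (a : ℝ) (X X' : V), P (a • X + X') = a • P X + P X') ∧
  (∀ X : V, skewAdj g (P X)) ∧
  (∀ X Y Z : V, g (P X Y) Z + g (P Y Z) X + g (P Z X) Y = 0)

/-!
Pair symmetry of each curvature tensor `R = S_{X_i}` gives
`g(R(X, X_j)Y, Z) = g(R(Y, Z)X, X_j)`, so the cyclic sum over `X, Y, Z` of
`g(P(X)Y, Z)` is a contraction of the first Bianchi sum `R(Y,Z)X + R(Z,X)Y + R(X,Y)Z = 0`.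
-/

section SkewAdj

variable {g : LinearMap.BilinForm ℝ V}

lemma skewAdj.smul {A : V →ₗ[ℝ] V} (hA : skewAdj g A) (c : ℝ) : skewAdj g (c • A) := by
  intro X Y
  simp only [LinearMap.smul_apply, map_smul, smul_eq_mul]
  rw [← mul_add, hA X Y, mul_zero]

lemma skewAdj_sum {ι : Type*} (s : Finset ι) {A : ι → V →ₗ[ℝ] V}
    (hA : ∀ i ∈ s, skewAdj g (A i)) : skewAdj g (∑ i ∈ s, A i) := by
  intro X Y
  simp only [LinearMap.sum_apply, map_sum, ← Finset.sum_add_distrib]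
  exact Finset.sum_eq_zero fun i hi => hA i hi X Y

end SkewAdj

namespace isCurv

variable {g : LinearMap.BilinForm ℝ V} {R : V → V → V →ₗ[ℝ] V}

lemma bianchi_apply (hR : isCurv g R) (X Y Z W : V) :
    g (R X Y Z) W + g (R Y Z X) W + g (R Z X Y) W = 0 := by
  simpa using congrArg (g · W) (hR.2.2.2 X Y Z)

lemma pair_symm (hR : isCurv g R) (hsymm : ∀ X Y : V, g X Y = g Y X) (X Y Z W : V) :
    g (R X Y Z) W = g (R Z W X) Y := by
  have skew₁₂ : ∀ A B C D : V, g (R A B C) D = - g (R B A C) D := by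
    intro A B C D; rw [hR.2.1 A B]; simp
  have skew₃₄ : ∀ A B C D : V, g (R A B C) D = - g (R A B D) C := by
    intro A B C D
    linarith [hR.2.2.1 A B C D, hsymm C (R A B D)]
  -- the classical argument: add the Bianchi identities of the four cyclic triples of `X, Y, Z, W`
  linarith [hR.bianchi_apply Y Z X W, hR.bianchi_apply Z X W Y, hR.bianchi_apply X W Y Z,
    hR.bianchi_apply W Y Z X, skew₃₄ Z X W Y, skew₃₄ W Y X Z, skew₃₄ Y Z W X, skew₃₄ X W Z Y,
    skew₁₂ Y X W Z, skew₃₄ X Y W Z, skew₁₂ Z W Y X, skew₃₄ W Z Y X, skew₁₂ W Z X Y]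

lemma cyclic_apply_pair (hR : isCurv g R) (hsymm : ∀ X Y : V, g X Y = g Y X) (X Y Z W : V) :
    g (R X W Y) Z + g (R Y W Z) X + g (R Z W X) Y = 0 := by
  rw [hR.pair_symm hsymm X W, hR.pair_symm hsymm Y W, hR.pair_symm hsymm Z W]
  linarith [hR.bianchi_apply X Y Z W]

end isCurv

lemma tr15_apply_apply {ι : Type*} [Fintype ι] [DecidableEq ι]
    (g : LinearMap.BilinForm ℝ V) (b : Basis ι ℝ V) (S : V → V → V → V →ₗ[ℝ] V)
    (X Y Z : V) :
    g (tr15 g b S X Y) Z = ∑ i, ∑ j, gramInv g b i j * g (S (b i) X (b j) Y) Z := by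
  simp [tr15, LinearMap.sum_apply, map_sum, smul_eq_mul]

theorem stmt_4_general (n : ℕ) (g : LinearMap.BilinForm ℝ V)
    (hsymm : ∀ X Y : V, g X Y = g Y X)
    (b : Basis (Fin n) ℝ V)
    (S : V → V → V → V →ₗ[ℝ] V)
    (hcurv : ∀ X : V, isCurv g (S X)) :
    (∀ X : V, skewAdj g (tr15 g b S X)) ∧
    (∀ X Y Z : V,
      g (tr15 g b S X Y) Z + g (tr15 g b S Y Z) X + g (tr15 g b S Z X) Y = 0) := by
  refine ⟨fun X => ?_, fun X Y Z => ?_⟩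
  · exact skewAdj_sum _ fun i _ => skewAdj_sum _ fun j _ => ((hcurv (b i)).2.2.1 X (b j)).smul _
  · simp only [tr15_apply_apply, ← Finset.sum_add_distrib]
    refine Finset.sum_eq_zero fun i _ => Finset.sum_eq_zero fun j _ => ?_
    linear_combination gramInv g b i j * (hcurv (b i)).cyclic_apply_pair hsymm X Y Z (b j)

theorem stmt_4 (n : ℕ) (g : LinearMap.BilinForm ℝ V)
    (hsymm : ∀ X Y : V, g X Y = g Y X) (hnd : Nondeg g)
    (b : Basis (Fin n) ℝ V)
    (S : V → V → V → V →ₗ[ℝ] V)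
    (hlin : ∀ (a : ℝ) (X X' Y Z : V), S (a • X + X') Y Z = a • S X Y Z + S X' Y Z)
    (hcurv : ∀ X : V, isCurv g (S X))
    (h2B : ∀ X Y Z : V, S X Y Z + S Y Z X + S Z X Y = 0) :
    (∀ X : V, skewAdj g (tr15 g b S X)) ∧
    (∀ X Y Z : V,
      g (tr15 g b S X Y) Z + g (tr15 g b S Y Z) X + g (tr15 g b S Z X) Y = 0) :=
  stmt_4_general n g hsymm b S hcurv
end

section
/- For any P ∈ P(so(p,q)), the vector Ric̃(P) := Σ g^{ij} P(X_i)X_j is well-defined (independent of the basis), and P decomposes as P = P₀ + P₁ with P₀(X) = P(X) + (1/(n−1))·Ric̃(P) ∧ X and P₁(X) = −(1/(n−1))·Ric̃(P) ∧ X, where P₀ and P₁ both lie in P(so(p,q)) and Ric̃(P₀) = 0. -/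
open LinearMap Finset Module

variable {V : Type*} [AddCommGroup V] [Module ℝ V]

/-! Skew-adjointness of each `P X` turns `g(Ric̃ P, Z)` into `-tr(X ↦ P(X)Z)`, an expression
without a basis, so by nondegeneracy `Ric̃ P` is basis independent. For `P = W ∧ ·` this trace
is `(n - 1) g(W, Z)`, whence `Ric̃(W ∧ ·) = (1 - n) W`. As `Ric̃` is linear in `P` and
`P(so(p,q))` is a linear space containing every `W ∧ ·`, adding `(n - 1)⁻¹ Ric̃(P) ∧ ·` to `P`
stays in `P(so(p,q))` and kills the contraction. -/

open scoped Matrix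

section Contraction

variable {ι : Type*} [Fintype ι] [DecidableEq ι] {g : LinearMap.BilinForm ℝ V}

lemma gramInv_eq_inv_toMatrix (b : Basis ι ℝ V) :
    gramInv g b = (LinearMap.BilinForm.toMatrix b g)⁻¹ := by
  rw [gramInv]
  congr 1
  ext i j
  simp [LinearMap.BilinForm.toMatrix_apply]

lemma sum_gramInv_mul_eq_trace (hsymm : ∀ X Y : V, g X Y = g Y X) (hnd : Nondeg g)
    (b : Basis ι ℝ V) (L : V →ₗ[ℝ] V) :
    ∑ i, ∑ j, gramInv g b i j * g (L (b i)) (b j) = trace ℝ V L := by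
  set G := LinearMap.BilinForm.toMatrix b g
  have hGt : Gᵀ = G := by
    ext i j
    simp [G, LinearMap.BilinForm.toMatrix_apply, hsymm (b i)]
  have hG : IsUnit G.det := by
    have : Module.Finite ℝ V := Module.Finite.of_basis b
    exact ((LinearMap.BilinForm.nondegenerate_iff_det_ne_zero b).mp
      (LinearMap.BilinForm.Nondegenerate.ofSeparatingLeft hnd)).isUnit
  have hL : ∀ i j, g (L (b i)) (b j) = ((toMatrix b b L)ᵀ * G) i j := fun i j => by
    rw [← LinearMap.BilinForm.toMatrix_compLeft, LinearMap.BilinForm.toMatrix_apply,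
      LinearMap.BilinForm.compLeft_apply]
  simp_rw [hL, gramInv_eq_inv_toMatrix, ← Matrix.hadamard_apply]
  rw [Matrix.sum_hadamard_eq, Matrix.transpose_mul, Matrix.transpose_transpose,
    hGt, ← Matrix.mul_assoc, Matrix.nonsing_inv_mul _ hG, Matrix.one_mul,
    trace_eq_matrix_trace ℝ b]

lemma ricTilde_apply_eq_neg_trace (hsymm : ∀ X Y : V, g X Y = g Y X) (hnd : Nondeg g)
    (b : Basis ι ℝ V) {P : V → V →ₗ[ℝ] V} (hskew : ∀ X : V, skewAdj g (P X))
    {Z : V} {L : V →ₗ[ℝ] V} (hL : ∀ X, L X = P X Z) :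
    g (ricTilde g b P) Z = - trace ℝ V L := by
  rw [← sum_gramInv_mul_eq_trace hsymm hnd b L]
  simp only [ricTilde, map_sum, map_smul, LinearMap.sum_apply,
    LinearMap.smul_apply, smul_eq_mul, hL, ← Finset.sum_neg_distrib]
  refine Finset.sum_congr rfl fun i _ => Finset.sum_congr rfl fun j _ => ?_
  rw [hsymm (P (b i) Z)]
  linear_combination gramInv g b i j * hskew (b i) (b j) Z

lemma exists_linearMap_apply_eq {P : V → V →ₗ[ℝ] V}
    (hlin : ∀ (a : ℝ) (X X' : V), P (a • X + X') = a • P X + P X') (Z : V) :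
    ∃ L : V →ₗ[ℝ] V, ∀ X, L X = P X Z := by
  have hP0 : P 0 = 0 := by simpa using hlin 1 0 0
  exact ⟨{ toFun := fun X => P X Z
           map_add' := fun X Y => by simpa using congrArg (· Z) (hlin 1 X Y)
           map_smul' := fun a X => by simpa [hP0] using congrArg (· Z) (hlin a X 0) },
    fun _ => rfl⟩

lemma ricTilde_eq_of_skewAdj {κ : Type*} [Fintype κ] [DecidableEq κ]
    (hsymm : ∀ X Y : V, g X Y = g Y X) (hnd : Nondeg g) (b : Basis ι ℝ V) (b' : Basis κ ℝ V)
    {P : V → V →ₗ[ℝ] V} (hlin : ∀ (a : ℝ) (X X' : V), P (a • X + X') = a • P X + P X')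
    (hskew : ∀ X : V, skewAdj g (P X)) :
    ricTilde g b P = ricTilde g b' P := by
  refine sub_eq_zero.mp (hnd _ fun Z => ?_)
  obtain ⟨L, hL⟩ := exists_linearMap_apply_eq hlin Z
  rw [map_sub, LinearMap.sub_apply, ricTilde_apply_eq_neg_trace hsymm hnd b hskew hL,
    ricTilde_apply_eq_neg_trace hsymm hnd b' hskew hL, sub_self]

lemma ricTilde_add_smul (b : Basis ι ℝ V) (P Q : V → V →ₗ[ℝ] V) (c : ℝ) :
    ricTilde g b (fun X => P X + c • Q X) = ricTilde g b P + c • ricTilde g b Q := by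
  simp only [ricTilde, LinearMap.add_apply, LinearMap.smul_apply, smul_add,
    Finset.sum_add_distrib, Finset.smul_sum, smul_comm c]

end Contraction

section Wedge

variable {g : LinearMap.BilinForm ℝ V}

lemma wdg_apply (X Y Z : V) : wdg g X Y Z = g X Z • Y - g Y Z • X := rfl

lemma isP_wdg (hsymm : ∀ X Y : V, g X Y = g Y X) (W : V) : isP g (wdg g W) := by
  refine ⟨fun a X X' => ?_, fun X Y Z => ?_, fun X Y Z => ?_⟩
  · ext Z
    simp only [wdg_apply, LinearMap.add_apply, LinearMap.smul_apply, map_add, map_smul,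
      smul_eq_mul]
    module
  · simp only [wdg_apply, map_sub, map_smul, LinearMap.sub_apply, LinearMap.smul_apply,
      smul_eq_mul, hsymm Y X, hsymm Y W]
    ring
  · simp only [wdg_apply, map_sub, map_smul, LinearMap.sub_apply, LinearMap.smul_apply,
      smul_eq_mul, hsymm X Z, hsymm Y X, hsymm Z Y]
    ring

lemma ricTilde_wdg {ι : Type*} [Fintype ι] [DecidableEq ι] (hsymm : ∀ X Y : V, g X Y = g Y X)
    (hnd : Nondeg g) (b : Basis ι ℝ V) (W : V) :
    ricTilde g b (wdg g W) = (1 - (finrank ℝ V : ℝ)) • W := by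
  have : Module.Finite ℝ V := Module.Finite.of_basis b
  refine sub_eq_zero.mp (hnd _ fun Z => ?_)
  have hL : ∀ X, (g W Z • LinearMap.id - (g.flip Z).smulRight W : V →ₗ[ℝ] V) X =
      wdg g W X Z := fun X => by
    simp [wdg_apply]
  rw [map_sub, LinearMap.sub_apply,
    ricTilde_apply_eq_neg_trace hsymm hnd b (isP_wdg hsymm W).2.1 hL, map_sub, map_smul,
    trace_id, trace_smulRight, map_smul, LinearMap.smul_apply]
  simp only [smul_eq_mul, LinearMap.BilinForm.flip_apply]
  ring

end Wedge

section IsP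

variable {g : LinearMap.BilinForm ℝ V} {P Q : V → V →ₗ[ℝ] V}

lemma isP.add (hP : isP g P) (hQ : isP g Q) : isP g (fun X => P X + Q X) := by
  refine ⟨fun a X X' => ?_, fun X Y Z => ?_, fun X Y Z => ?_⟩
  · simp only [hP.1, hQ.1]
    module
  · simp only [LinearMap.add_apply, map_add]
    linear_combination hP.2.1 X Y Z + hQ.2.1 X Y Z
  · simp only [LinearMap.add_apply, map_add]
    linear_combination hP.2.2 X Y Z + hQ.2.2 X Y Z

lemma isP.smul (c : ℝ) (hP : isP g P) : isP g (fun X => c • P X) := by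
  refine ⟨fun a X X' => ?_, fun X Y Z => ?_, fun X Y Z => ?_⟩
  · simp only [hP.1]
    module
  · simp only [LinearMap.smul_apply, map_smul, smul_eq_mul]
    linear_combination c * hP.2.1 X Y Z
  · simp only [LinearMap.smul_apply, map_smul, smul_eq_mul]
    linear_combination c * hP.2.2 X Y Z

lemma isP.neg (hP : isP g P) : isP g (fun X => -P X) := by
  simpa only [neg_one_smul] using hP.smul (-1)

end IsP

theorem stmt_5 {ι κ : Type*} [Fintype ι] [DecidableEq ι] [Fintype κ] [DecidableEq κ]
    (n : ℕ) (hn : 2 ≤ n) (g : LinearMap.BilinForm ℝ V)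
    (hsymm : ∀ X Y : V, g X Y = g Y X) (hnd : Nondeg g)
    (hdim : Module.finrank ℝ V = n)
    (b : Basis ι ℝ V) (b' : Basis κ ℝ V)
    (P : V → V →ₗ[ℝ] V) (hP : isP g P) :
    ricTilde g b P = ricTilde g b' P ∧
    (let P₀ : V → V →ₗ[ℝ] V := fun X => P X + ((n : ℝ) - 1)⁻¹ • wdg g (ricTilde g b P) X
     let P₁ : V → V →ₗ[ℝ] V := fun X => -(((n : ℝ) - 1)⁻¹ • wdg g (ricTilde g b P) X)
     (∀ X : V, P X = P₀ X + P₁ X) ∧ isP g P₀ ∧ isP g P₁ ∧ ricTilde g b P₀ = 0) := by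
  have hn1 : (n : ℝ) - 1 ≠ 0 := by
    have : (2 : ℝ) ≤ n := by exact_mod_cast hn
    linarith
  have hwdg := isP_wdg hsymm (ricTilde g b P)
  refine ⟨ricTilde_eq_of_skewAdj hsymm hnd b b' hP.1 hP.2.1, fun X => by simp,
    hP.add (hwdg.smul _), (hwdg.smul _).neg, ?_⟩
  rw [ricTilde_add_smul, ricTilde_wdg hsymm hnd, hdim, smul_smul,
    show ((n : ℝ) - 1)⁻¹ * (1 - n) = -1 by field_simp; ring, neg_one_smul, add_neg_cancel]
end

section
/- For a symmetric endomorphism H of ℝ^{2p,2q} commuting with J, the tensor R_H = H ∧_J g defined by R_H(X,Y) = HX ∧_J Y + X ∧_J HY + 2g(HJX,Y)J + 2g(JX,Y)JH is an algebraic curvature tensor with values in u(p,q): R_H(X,Y) ∈ u(p,q), R_H is skew in X,Y, and it satisfies the first Bianchi identity. -/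
open LinearMap Finset Module

variable {V : Type*} [AddCommGroup V] [Module ℝ V]

/-- `X ∧_J Y = X ∧ Y + JX ∧ JY`. -/
noncomputable def wdgJ (g : LinearMap.BilinForm ℝ V) (J : V →ₗ[ℝ] V) (X Y : V) : V →ₗ[ℝ] V :=
  wdg g X Y + wdg g (J X) (J Y)

/-- The Kähler wedge `(H ∧_J g)(X,Y) = HX ∧_J Y + X ∧_J HY + 2g(HJX,Y)J + 2g(JX,Y)JH`. -/
noncomputable def hwdgJ (g : LinearMap.BilinForm ℝ V) (J : V →ₗ[ℝ] V) (H : V →ₗ[ℝ] V)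
    (X Y : V) : V →ₗ[ℝ] V :=
  wdgJ g J (H X) Y + wdgJ g J X (H Y) + (2 * g (H (J X)) Y) • J + (2 * g (J X) Y) • (J ∘ₗ H)

/-! `X ∧ Y` is `g`-skew because `g` is symmetric, `J` is skew because it is an isometry with
`J² = -1`, and `JH` is skew because `J` is skew, `H` symmetric and they commute. `X ∧_J Y`
commutes with `J` since `J` is skew with `J² = -1`, so `R_H(X,Y)` lies in `u(p,q)`.
Skewness in `X, Y` reduces to that of `∧` and of the 2-forms `g(J·,·)`, `g(JH·,·)`. For the
Bianchi identity write `R_H(X,Y) = (H ∧ g)(X,Y) + (H ∧ g)(JX,JY) + 2g(HJX,Y)J + 2g(JX,Y)JH`: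
the first summand is the classical curvature tensor `H ∧ g`, and the cyclic sum of the remaining
ones cancels by the antisymmetry of the same two 2-forms. -/

section KaehlerWedge

variable {g : LinearMap.BilinForm ℝ V} {A H J : V →ₗ[ℝ] V}

theorem skewAdj_iff_mem_skewAdjointSubmodule :
    skewAdj g A ↔ A ∈ LinearMap.skewAdjointSubmodule g := by
  simp [skewAdj, LinearMap.IsSkewAdjoint, LinearMap.IsAdjointPair, add_eq_zero_iff_eq_neg]

/-- The Lie algebra `u(p,q)` inside `so(2p,2q)`. -/
def skewHermitianSubmodule (g : LinearMap.BilinForm ℝ V) (J : V →ₗ[ℝ] V) :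
    Submodule ℝ (Module.End ℝ V) :=
  LinearMap.skewAdjointSubmodule g ⊓ Subalgebra.toSubmodule (Subalgebra.centralizer ℝ {J})

theorem mem_skewHermitianSubmodule_iff :
    A ∈ skewHermitianSubmodule g J ↔ skewAdj g A ∧ Commute A J := by
  rw [skewHermitianSubmodule, Submodule.mem_inf, ← skewAdj_iff_mem_skewAdjointSubmodule,
    Subalgebra.mem_toSubmodule, Subalgebra.mem_centralizer_iff]
  simp [Commute, SemiconjBy, eq_comm]

theorem skewAdj.apply_swap (hsymm : ∀ X Y : V, g X Y = g Y X) (hA : skewAdj g A) (X Y : V) :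
    g (A X) Y = - g (A Y) X := by
  rw [hsymm (A Y), eq_neg_iff_add_eq_zero, hA]

theorem skewAdj_wdg (hsymm : ∀ X Y : V, g X Y = g Y X) (X Y : V) : skewAdj g (wdg g X Y) := by
  intro Z W
  simp only [wdg, LinearMap.sub_apply, LinearMap.smulRight_apply, map_sub, map_smul,
    LinearMap.smul_apply, smul_eq_mul, hsymm Z]
  ring

theorem skewAdj_of_isometry_of_sq_neg (hJ2 : ∀ X : V, J (J X) = -X)
    (hJg : ∀ X Y : V, g (J X) (J Y) = g X Y) : skewAdj g J := by
  intro X Y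
  rw [← hJg X (J Y), hJ2, map_neg, add_neg_cancel]

theorem skewAdj.comp_of_commute (hA : skewAdj g A) (hH : ∀ X Y : V, g (H X) Y = g X (H Y))
    (hAH : Commute A H) : skewAdj g (A ∘ₗ H) := by
  intro X Y
  have hHA : H (A Y) = A (H Y) := (LinearMap.congr_fun hAH.eq Y).symm
  rw [LinearMap.comp_apply, LinearMap.comp_apply, ← hHA, ← hH, hA]

theorem wdg_swap (X Y : V) : wdg g X Y = - wdg g Y X := by
  rw [wdg, wdg, neg_sub]

theorem wdgJ_swap (X Y : V) : wdgJ g J X Y = - wdgJ g J Y X := by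
  rw [wdgJ, wdgJ, wdg_swap X, wdg_swap (J X), neg_add]

theorem commute_wdgJ (hJ2 : ∀ X : V, J (J X) = -X) (hJ : skewAdj g J) (X Y : V) :
    Commute (wdgJ g J X Y) J := by
  have hJr : ∀ a b : V, g a (J b) = - g (J a) b := fun a b => eq_neg_of_add_eq_zero_right (hJ a b)
  ext Z
  simp only [Module.End.mul_apply, wdgJ, wdg, LinearMap.add_apply, LinearMap.sub_apply,
    LinearMap.smulRight_apply, map_add, map_sub, map_smul, hJr, hJ2, LinearMap.map_neg,
    LinearMap.neg_apply]
  module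

theorem wdgJ_mem_skewHermitianSubmodule (hsymm : ∀ X Y : V, g X Y = g Y X)
    (hJ2 : ∀ X : V, J (J X) = -X) (hJ : skewAdj g J) (X Y : V) :
    wdgJ g J X Y ∈ skewHermitianSubmodule g J := by
  refine mem_skewHermitianSubmodule_iff.2 ⟨?_, commute_wdgJ hJ2 hJ X Y⟩
  rw [skewAdj_iff_mem_skewAdjointSubmodule, wdgJ]
  exact add_mem (skewAdj_iff_mem_skewAdjointSubmodule.1 (skewAdj_wdg hsymm X Y))
    (skewAdj_iff_mem_skewAdjointSubmodule.1 (skewAdj_wdg hsymm (J X) (J Y)))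

theorem hwdgJ_mem_skewHermitianSubmodule (hsymm : ∀ X Y : V, g X Y = g Y X)
    (hJ2 : ∀ X : V, J (J X) = -X) (hJ : skewAdj g J) (hH : ∀ X Y : V, g (H X) Y = g X (H Y))
    (hHJ : Commute H J) (X Y : V) :
    hwdgJ g J H X Y ∈ skewHermitianSubmodule g J := by
  have hJ_mem : J ∈ skewHermitianSubmodule g J :=
    mem_skewHermitianSubmodule_iff.2 ⟨hJ, Commute.refl J⟩
  have hJH_mem : J ∘ₗ H ∈ skewHermitianSubmodule g J :=
    mem_skewHermitianSubmodule_iff.2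
      ⟨hJ.comp_of_commute hH hHJ.symm, (Commute.refl J).mul_left hHJ⟩
  exact add_mem (add_mem (add_mem (wdgJ_mem_skewHermitianSubmodule hsymm hJ2 hJ _ _)
    (wdgJ_mem_skewHermitianSubmodule hsymm hJ2 hJ _ _)) (Submodule.smul_mem _ _ hJ_mem))
    (Submodule.smul_mem _ _ hJH_mem)

theorem hwdgJ_swap (hsymm : ∀ X Y : V, g X Y = g Y X) (hJ : skewAdj g J)
    (hJH : skewAdj g (J ∘ₗ H)) (hHJ : ∀ X : V, H (J X) = J (H X)) (X Y : V) :
    hwdgJ g J H X Y = - hwdgJ g J H Y X := by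
  have hHJ_swap : g (H (J X)) Y = - g (H (J Y)) X := by
    rw [hHJ, hHJ]
    exact hJH.apply_swap hsymm X Y
  rw [hwdgJ, hwdgJ, wdgJ_swap (H X), wdgJ_swap X, hHJ_swap, hJ.apply_swap hsymm X Y]
  module

theorem hwdg_bianchi (hsymm : ∀ X Y : V, g X Y = g Y X)
    (hH : ∀ X Y : V, g (H X) Y = g X (H Y)) (X Y Z : V) :
    hwdg g H X Y Z + hwdg g H Y Z X + hwdg g H Z X Y = 0 := by
  simp only [hwdg, wdg, LinearMap.add_apply, LinearMap.sub_apply, LinearMap.smulRight_apply]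
  rw [hH Y X, hH Z Y, hH X Z, hsymm Y (H X), hsymm Z (H Y), hsymm X (H Z), hsymm Y X, hsymm Z Y,
    hsymm X Z]
  module

theorem hwdgJ_eq_hwdg_add (hHJ : ∀ X : V, H (J X) = J (H X)) (X Y : V) :
    hwdgJ g J H X Y = hwdg g H X Y + hwdg g H (J X) (J Y)
      + (2 * g (H (J X)) Y) • J + (2 * g (J X) Y) • (J ∘ₗ H) := by
  rw [hwdgJ, wdgJ, wdgJ, hwdg, hwdg, hHJ, hHJ]
  abel

theorem hwdgJ_bianchi (hsymm : ∀ X Y : V, g X Y = g Y X) (hJ : skewAdj g J)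
    (hH : ∀ X Y : V, g (H X) Y = g X (H Y)) (hHJ : ∀ X : V, H (J X) = J (H X)) (X Y Z : V) :
    hwdgJ g J H X Y Z + hwdgJ g J H Y Z X + hwdgJ g J H Z X Y = 0 := by
  have hJH : skewAdj g (J ∘ₗ H) := hJ.comp_of_commute hH (LinearMap.ext hHJ).symm
  have hJ_swap := hJ.apply_swap hsymm
  have hJH_swap : ∀ a b : V, g (J (H a)) b = - g (J (H b)) a := hJH.apply_swap hsymm
  have hH_bianchi := hwdg_bianchi hsymm hH X Y Z
  simp only [hwdgJ_eq_hwdg_add hHJ, hwdg, wdg, LinearMap.add_apply, LinearMap.sub_apply,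
    LinearMap.smulRight_apply, LinearMap.smul_apply, LinearMap.comp_apply, hHJ] at hH_bianchi ⊢
  rw [hJ_swap X Z, hJ_swap Y X, hJ_swap Z Y, hJH_swap X Z, hJH_swap Y X, hJH_swap Z Y]
  linear_combination (norm := module) hH_bianchi

end KaehlerWedge

theorem stmt_15 (g : LinearMap.BilinForm ℝ V)
    (hsymm : ∀ X Y : V, g X Y = g Y X)
    (J : V →ₗ[ℝ] V) (hJ2 : ∀ X : V, J (J X) = -X)
    (hJg : ∀ X Y : V, g (J X) (J Y) = g X Y)
    (H : V →ₗ[ℝ] V) (hH : ∀ X Y : V, g (H X) Y = g X (H Y))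
    (hHJ : ∀ X : V, H (J X) = J (H X)) :
    (∀ X Y : V, skewAdj g (hwdgJ g J H X Y)) ∧
    (∀ X Y Z : V, hwdgJ g J H X Y (J Z) = J (hwdgJ g J H X Y Z)) ∧
    (∀ X Y : V, hwdgJ g J H X Y = - hwdgJ g J H Y X) ∧
    (∀ X Y Z : V, hwdgJ g J H X Y Z + hwdgJ g J H Y Z X + hwdgJ g J H Z X Y = 0) := by
  have hJ : skewAdj g J := skewAdj_of_isometry_of_sq_neg hJ2 hJg
  have hHJ' : Commute H J := LinearMap.ext hHJ
  have hJH : skewAdj g (J ∘ₗ H) := hJ.comp_of_commute hH hHJ'.symm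
  have hmem X Y := mem_skewHermitianSubmodule_iff.1
    (hwdgJ_mem_skewHermitianSubmodule hsymm hJ2 hJ hH hHJ' X Y)
  exact ⟨fun X Y => (hmem X Y).1, fun X Y => LinearMap.congr_fun (hmem X Y).2.eq,
    hwdgJ_swap hsymm hJ hJH hHJ, hwdgJ_bianchi hsymm hJ hH hHJ⟩
end
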